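/- Let p > 1 and let φ: ℝ → ℝ be defined by φ(x) = 1 for |x| ≤ 1/2, φ(x) = exp(−1/(1−x²)) / (exp(−1/(x²−1/4)) + exp(−1/(1−x²))) for 1/2 < |x| < 1, and φ(x) = 0 for |x| ≥ 1. Then there exists a constant C > 0 such that |φ'(x)| ≤ C·φ(x)^{1/p} for all x ∈ ℝ. -/

import Mathlib

/-!
Write `g = expNegInvGlue`, `u = 1 - x²`, `v = x² - 1/4`, so that `φ = g u / (g v + g u)` on all
of `ℝ`. Since `u + v = 3/4`, the denominator is at least `e⁻³`, hence `φ ≤ e³ g u` and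
`1 - φ ≤ e³ g v`. On `1/2 < |x| < 1` one computes `φ' = -2x φ (1 - φ) (1/u² + 1/v²)`; the bound
`g u ^ a ≤ 2u²/a²` lets `φ ^ (1 - 1/p)` absorb the factor `1/u²`, and `1 - φ` absorbs `1/v²`.
Everywhere else `φ ∈ {0, 1}` is a global extremum of `φ`, so `φ' = 0`.
-/

noncomputable def phi : ℝ → ℝ := fun x =>
  if |x| ≤ 1/2 then 1
  else if |x| < 1 then
    Real.exp (-1/(1-x^2)) / (Real.exp (-1/(x^2-1/4)) + Real.exp (-1/(1-x^2)))
  else 0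

open Real

namespace expNegInvGlue

lemma eq_exp_neg_inv {y : ℝ} (hy : 0 < y) : expNegInvGlue y = exp (-y⁻¹) := by
  simp [expNegInvGlue, not_le.2 hy]

lemma hasDerivAt_of_pos {y : ℝ} (hy : 0 < y) :
    HasDerivAt expNegInvGlue (expNegInvGlue y / y ^ 2) y := by
  have h : HasDerivAt (fun z => exp (-z⁻¹)) (exp (-y⁻¹) * -(-(y ^ 2)⁻¹)) y :=
    (hasDerivAt_inv hy.ne').neg.exp
  have heq : expNegInvGlue =ᶠ[nhds y] fun z => exp (-z⁻¹) := by
    filter_upwards [Ioi_mem_nhds hy] with z hz using eq_exp_neg_inv hz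
  simpa [eq_exp_neg_inv hy, div_eq_mul_inv] using h.congr_of_eventuallyEq heq

lemma rpow_div_sq_le {a u : ℝ} (ha : 0 < a) (hu : 0 < u) :
    expNegInvGlue u ^ a / u ^ 2 ≤ 2 / a ^ 2 := by
  have hexp : (a / u) ^ 2 / 2 ≤ exp (a / u) := by
    simpa using pow_div_factorial_le_exp _ (div_pos ha hu).le 2
  rw [eq_exp_neg_inv hu, ← exp_mul, show -u⁻¹ * a = -(a / u) by ring, exp_neg,
    div_le_div_iff₀ (by positivity) (by positivity), inv_mul_le_iff₀ (exp_pos _)]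
  calc a ^ 2 = 2 * u ^ 2 * ((a / u) ^ 2 / 2) := by field_simp
    _ ≤ 2 * u ^ 2 * exp (a / u) := by gcongr
    _ = exp (a / u) * (2 * u ^ 2) := by ring

lemma exp_neg_three_le_add {u v : ℝ} (h : u + v = 3 / 4) :
    exp (-3) ≤ expNegInvGlue u + expNegInvGlue v := by
  have h38 : exp (-3) ≤ expNegInvGlue (3 / 8) := by
    rw [eq_exp_neg_inv (by norm_num)]
    exact exp_le_exp.2 (by norm_num)
  rcases le_total (3 / 8) u with hu | hv
  · linarith [expNegInvGlue.monotone hu, nonneg v]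
  · linarith [expNegInvGlue.monotone (show (3 / 8 : ℝ) ≤ v by linarith), nonneg u]

end expNegInvGlue

open expNegInvGlue

lemma phi_eq_glue (x : ℝ) :
    phi x = expNegInvGlue (1 - x ^ 2) /
      (expNegInvGlue (x ^ 2 - 1 / 4) + expNegInvGlue (1 - x ^ 2)) := by
  have hx2 : x ^ 2 = |x| ^ 2 := (sq_abs x).symm
  have h0 : 0 ≤ |x| := abs_nonneg x
  unfold phi
  split_ifs with h1 h2
  · have hu : 0 < 1 - x ^ 2 := by nlinarith
    rw [zero_of_nonpos (x := x ^ 2 - 1 / 4) (by nlinarith), zero_add, div_self (pos_of_pos hu).ne']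
  · rw [eq_exp_neg_inv (by nlinarith), eq_exp_neg_inv (by nlinarith), inv_eq_one_div,
      inv_eq_one_div, neg_div, neg_div]
  · rw [zero_of_nonpos (x := 1 - x ^ 2) (by nlinarith), zero_div]

lemma quarter_lt_sq_and_sq_lt_one {x : ℝ} (h1 : 1 / 2 < |x|) (h2 : |x| < 1) :
    1 / 4 < x ^ 2 ∧ x ^ 2 < 1 := by
  rw [← sq_abs]
  constructor <;> nlinarith

lemma phi_nonneg (x : ℝ) : 0 ≤ phi x := by
  rw [phi_eq_glue]
  exact div_nonneg (nonneg _) (add_nonneg (nonneg _) (nonneg _))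

lemma phi_le_one (x : ℝ) : phi x ≤ 1 := by
  rw [phi_eq_glue]
  exact div_le_one_of_le₀ (le_add_of_nonneg_left (nonneg _))
    (add_nonneg (nonneg _) (nonneg _))

lemma one_le_exp_three_mul_glue_add (x : ℝ) :
    1 ≤ exp 3 * (expNegInvGlue (x ^ 2 - 1 / 4) + expNegInvGlue (1 - x ^ 2)) := by
  calc (1 : ℝ) = exp 3 * exp (-3) := by rw [← exp_add]; norm_num
    _ ≤ _ := by gcongr; exact exp_neg_three_le_add (by ring)

lemma glue_add_pos (x : ℝ) :
    0 < expNegInvGlue (x ^ 2 - 1 / 4) + expNegInvGlue (1 - x ^ 2) :=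
  pos_of_mul_pos_right ((one_pos).trans_le (one_le_exp_three_mul_glue_add x)) (exp_pos 3).le

lemma phi_le_exp_three_mul (x : ℝ) : phi x ≤ exp 3 * expNegInvGlue (1 - x ^ 2) := by
  rw [phi_eq_glue, div_le_iff₀ (glue_add_pos x)]
  nlinarith [one_le_exp_three_mul_glue_add x, nonneg (1 - x ^ 2)]

lemma one_sub_phi_le_exp_three_mul (x : ℝ) :
    1 - phi x ≤ exp 3 * expNegInvGlue (x ^ 2 - 1 / 4) := by
  rw [phi_eq_glue, one_sub_div (glue_add_pos x).ne', add_sub_cancel_right,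
    div_le_iff₀ (glue_add_pos x)]
  nlinarith [one_le_exp_three_mul_glue_add x, nonneg (x ^ 2 - 1 / 4)]

lemma deriv_phi_eq_zero {x : ℝ} (h : |x| ≤ 1 / 2 ∨ 1 ≤ |x|) : deriv phi x = 0 := by
  have : phi x = 1 ∨ phi x = 0 := by
    rcases h with h | h
    · left
      simp only [phi]
      rw [if_pos h]
    · right
      simp only [phi]
      rw [if_neg (by linarith), if_neg (by linarith)]
  rcases this with h1 | h0
  · refine IsLocalMax.deriv_eq_zero (IsMaxOn.isLocalMax (fun y _ => ?_) Filter.univ_mem)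
    simpa [h1] using phi_le_one y
  · refine IsLocalMin.deriv_eq_zero (IsMinOn.isLocalMin (fun y _ => ?_) Filter.univ_mem)
    simpa [h0] using phi_nonneg y

lemma hasDerivAt_phi {x : ℝ} (h1 : 1 / 2 < |x|) (h2 : |x| < 1) :
    HasDerivAt phi
      (-(2 * x) * (phi x * (1 - phi x)) * (1 / (1 - x ^ 2) ^ 2 + 1 / (x ^ 2 - 1 / 4) ^ 2)) x := by
  obtain ⟨hx1, hx2⟩ := quarter_lt_sq_and_sq_lt_one h1 h2
  have hu : 0 < 1 - x ^ 2 := by linarith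
  have hv : 0 < x ^ 2 - 1 / 4 := by linarith
  have dU : HasDerivAt (fun y => expNegInvGlue (1 - y ^ 2))
      (expNegInvGlue (1 - x ^ 2) / (1 - x ^ 2) ^ 2 * -(2 * x)) x :=
    (hasDerivAt_of_pos hu).comp x (h := fun y => 1 - y ^ 2)
      (by simpa using (hasDerivAt_pow 2 x).const_sub 1)
  have dV : HasDerivAt (fun y => expNegInvGlue (y ^ 2 - 1 / 4))
      (expNegInvGlue (x ^ 2 - 1 / 4) / (x ^ 2 - 1 / 4) ^ 2 * (2 * x)) x :=
    (hasDerivAt_of_pos hv).comp x (h := fun y => y ^ 2 - 1 / 4)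
      (by simpa using (hasDerivAt_pow 2 x).sub_const (1 / 4))
  have hD : HasDerivAt (fun y => expNegInvGlue (1 - y ^ 2) /
      (expNegInvGlue (y ^ 2 - 1 / 4) + expNegInvGlue (1 - y ^ 2))) _ x :=
    dU.div (dV.add dU) (glue_add_pos x).ne'
  rw [phi_eq_glue x, show phi = _ from funext phi_eq_glue]
  convert hD using 1
  have hB := (glue_add_pos x).ne'
  have hu' := hu.ne'
  have hv' := hv.ne'
  set G := expNegInvGlue (1 - x ^ 2)
  set H := expNegInvGlue (x ^ 2 - 1 / 4)
  field_simp
  ring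

lemma mul_one_sub_mul_inv_sq_add_le {r u v q : ℝ} (hr0 : 0 ≤ r) (hr1 : r ≤ 1) (hu : 0 < u)
    (hv : 0 < v) (hq0 : 0 ≤ q) (hq1 : q < 1) (hru : r ≤ exp 3 * expNegInvGlue u)
    (hrv : 1 - r ≤ exp 3 * expNegInvGlue v) :
    r * (1 - r) * (1 / u ^ 2 + 1 / v ^ 2) ≤ 2 * exp 3 * (1 / (1 - q) ^ 2 + 1) * r ^ q := by
  have ha : 0 < 1 - q := by linarith
  have hrq : 0 ≤ r ^ q := rpow_nonneg hr0 q
  have hu_term : r / u ^ 2 ≤ r ^ q * (exp 3 * (2 / (1 - q) ^ 2)) := by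
    have hra : r ^ (1 - q) ≤ exp 3 * expNegInvGlue u ^ (1 - q) :=
      calc r ^ (1 - q) ≤ (exp 3 * expNegInvGlue u) ^ (1 - q) := by gcongr
        _ = exp 3 ^ (1 - q) * expNegInvGlue u ^ (1 - q) :=
          mul_rpow (exp_pos 3).le (nonneg u)
        _ ≤ exp 3 * expNegInvGlue u ^ (1 - q) := by
          gcongr
          · exact rpow_nonneg (nonneg u) _
          · exact rpow_le_self_of_one_le (one_le_exp (by norm_num)) (by linarith)
    calc r / u ^ 2 = r ^ q * (r ^ (1 - q) / u ^ 2) := by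
          rw [mul_div_assoc', ← rpow_add' hr0 (by norm_num), add_sub_cancel, rpow_one]
      _ ≤ r ^ q * (exp 3 * expNegInvGlue u ^ (1 - q) / u ^ 2) := by gcongr
      _ ≤ r ^ q * (exp 3 * (2 / (1 - q) ^ 2)) := by
          rw [mul_div_assoc]
          exact mul_le_mul_of_nonneg_left (mul_le_mul_of_nonneg_left (rpow_div_sq_le ha hu)
            (exp_pos 3).le) hrq
  have hv_term : (1 - r) / v ^ 2 ≤ exp 3 * 2 := by
    calc (1 - r) / v ^ 2 ≤ exp 3 * (expNegInvGlue v / v ^ 2) := by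
          rw [← mul_div_assoc]; gcongr
      _ ≤ exp 3 * 2 := by
          gcongr
          simpa using rpow_div_sq_le one_pos hv
  calc r * (1 - r) * (1 / u ^ 2 + 1 / v ^ 2)
      = (1 - r) * (r / u ^ 2) + r * ((1 - r) / v ^ 2) := by ring
    _ ≤ 1 * (r ^ q * (exp 3 * (2 / (1 - q) ^ 2))) + r ^ q * (exp 3 * 2) := by
        gcongr
        · linarith
        · exact self_le_rpow_of_le_one hr0 hr1 hq1.le
    _ = 2 * exp 3 * (1 / (1 - q) ^ 2 + 1) * r ^ q := by ring

theorem stmt1 (p : ℝ) (hp : 1 < p) :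
    ∃ C > 0, ∀ x : ℝ, |deriv phi x| ≤ C * phi x ^ (1/p) := by
  have hq0 : 0 ≤ 1 / p := by positivity
  have hq1 : 1 / p < 1 := (div_lt_one (by linarith)).2 hp
  refine ⟨2 * (2 * exp 3 * (1 / (1 - 1 / p) ^ 2 + 1)), by positivity, fun x => ?_⟩
  by_cases hx : 1 / 2 < |x| ∧ |x| < 1
  · obtain ⟨h1, h2⟩ := hx
    obtain ⟨hx1, hx2⟩ := quarter_lt_sq_and_sq_lt_one h1 h2
    have hu : 0 < 1 - x ^ 2 := by linarith
    have hv : 0 < x ^ 2 - 1 / 4 := by linarith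
    have hbound := mul_one_sub_mul_inv_sq_add_le (phi_nonneg x) (phi_le_one x) hu hv hq0 hq1
      (phi_le_exp_three_mul x) (one_sub_phi_le_exp_three_mul x)
    have hS : 0 ≤ phi x * (1 - phi x) * (1 / (1 - x ^ 2) ^ 2 + 1 / (x ^ 2 - 1 / 4) ^ 2) :=
      mul_nonneg (mul_nonneg (phi_nonneg x) (by linarith [phi_le_one x])) (by positivity)
    calc |deriv phi x|
        = 2 * |x| * (phi x * (1 - phi x) * (1 / (1 - x ^ 2) ^ 2 + 1 / (x ^ 2 - 1 / 4) ^ 2)) := by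
          rw [(hasDerivAt_phi h1 h2).deriv, mul_assoc, abs_mul, abs_of_nonneg hS, abs_neg,
            abs_mul, abs_two]
      _ ≤ 2 * 1 * (2 * exp 3 * (1 / (1 - 1 / p) ^ 2 + 1) * phi x ^ (1 / p)) := by
          gcongr
      _ = _ := by ring
  · rw [deriv_phi_eq_zero (by rw [not_and_or, not_lt, not_lt] at hx; exact hx), abs_zero]
    exact mul_nonneg (by positivity) (rpow_nonneg (phi_nonneg x) _)
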